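/- Let T be a Tambara functor on a finite group G and 𝔦 ⊆ T an ideal. Define √𝔦 by (√𝔦)(X) = { a ∈ T(X) : ⟨a⟩ⁿ ⊆ 𝔦 for some n ∈ ℕ }. Then √𝔦 is an ideal of T containing 𝔦, and √𝔦 ⊆ ⋂_{𝔭 prime, 𝔦 ⊆ 𝔭} 𝔭; consequently V(√𝔦) = V(𝔦) in Spec(T). -/

import Mathlib

set_option autoImplicit false

/-! Finite G-sets -/

structure GSet (G : Type) [Group G] : Type 1 where
  carrier : Type
  [mulAction : MulAction G carrier]
  [finite : Finite carrier]

attribute [instance] GSet.mulAction GSet.finite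

/-- Equivariant maps of finite `G`-sets. -/
structure GSetHom {G : Type} [Group G] (X Y : GSet G) : Type where
  toFun : X.carrier → Y.carrier
  map_smul : ∀ (g : G) (x : X.carrier), toFun (g • x) = g • toFun x

namespace GSetHom

variable {G : Type} [Group G]

def id (X : GSet G) : GSetHom X X := ⟨fun x => x, fun _ _ => rfl⟩

def comp {X Y Z : GSet G} (g : GSetHom Y Z) (f : GSetHom X Y) : GSetHom X Z :=
  ⟨fun x => g.toFun (f.toFun x), fun a x => by
    show g.toFun (f.toFun (a • x)) = a • g.toFun (f.toFun x)
    rw [f.map_smul, g.map_smul]⟩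

end GSetHom

namespace GSet

variable {G : Type} [Group G]

/-- Binary disjoint union of `G`-sets. -/
def sum (X Y : GSet G) : GSet G where
  carrier := X.carrier ⊕ Y.carrier

def inl (X Y : GSet G) : GSetHom X (X.sum Y) := ⟨Sum.inl, fun _ _ => rfl⟩

def inr (X Y : GSet G) : GSetHom Y (X.sum Y) := ⟨Sum.inr, fun _ _ => rfl⟩

instance : MulAction G Empty where
  smul _ x := x.elim
  one_smul x := x.elim
  mul_smul _ _ x := x.elim

/-- The empty `G`-set. -/
def empty (G : Type) [Group G] : GSet G where
  carrier := Empty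

/-- Finite disjoint unions of `G`-sets. -/
def sigma {n : ℕ} (Xs : Fin n → GSet G) : GSet G where
  carrier := Σ i, (Xs i).carrier

def sigmaIncl {n : ℕ} (Xs : Fin n → GSet G) (i : Fin n) : GSetHom (Xs i) (sigma Xs) :=
  ⟨fun x => ⟨i, x⟩, fun _ _ => rfl⟩

/-- The canonical pullback of two `G`-maps. -/
def pullback {X Y Z : GSet G} (f : GSetHom X Z) (g : GSetHom Y Z) : GSet G where
  carrier := { q : X.carrier × Y.carrier // f.toFun q.1 = g.toFun q.2 }
  mulAction :=
  { smul := fun a q => ⟨a • q.val, by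
      show f.toFun (a • q.val.1) = g.toFun (a • q.val.2)
      rw [f.map_smul, g.map_smul, q.property]⟩
    one_smul := fun q => Subtype.ext (one_smul G q.val)
    mul_smul := fun a b q => Subtype.ext (mul_smul a b q.val) }

def pbFst {X Y Z : GSet G} (f : GSetHom X Z) (g : GSetHom Y Z) :
    GSetHom (pullback f g) X := ⟨fun q => q.val.1, fun _ _ => rfl⟩

def pbSnd {X Y Z : GSet G} (f : GSetHom X Z) (g : GSetHom Y Z) :
    GSetHom (pullback f g) Y := ⟨fun q => q.val.2, fun _ _ => rfl⟩

/-- The complement of the image of a `G`-map, as a `G`-set. -/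
def compl {X Y : GSet G} (f : GSetHom X Y) : GSet G where
  carrier := { y : Y.carrier // ∀ x, f.toFun x ≠ y }
  mulAction :=
  { smul := fun g y => ⟨g • y.val, fun x h => y.property (g⁻¹ • x) (by
      rw [f.map_smul, h, inv_smul_smul])⟩
    one_smul := fun y => Subtype.ext (one_smul G y.val)
    mul_smul := fun a b y => Subtype.ext (mul_smul a b y.val) }

def complIncl {X Y : GSet G} (f : GSetHom X Y) : GSetHom (compl f) Y :=
  ⟨fun y => y.val, fun _ _ => rfl⟩

/-- Points of Tambara's dependent product `Π_f(A)`: pairs `(y, σ)` of a point `y : Y`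
and a section `σ` of `p` on the fiber `f⁻¹(y)` (encoded as an `Option`-valued function
supported exactly on the fiber). -/
def PiProp {X Y A : GSet G} (f : GSetHom X Y) (p : GSetHom A X)
    (s : Y.carrier × (X.carrier → Option A.carrier)) : Prop :=
  (∀ x, (s.2 x).isSome = true ↔ f.toFun x = s.1) ∧
  (∀ x a, s.2 x = some a → p.toFun a = x)

def PiCar {X Y A : GSet G} (f : GSetHom X Y) (p : GSetHom A X) : Type :=
  { s : Y.carrier × (X.carrier → Option A.carrier) // PiProp f p s }

instance optionFinite {α : Type} [Finite α] : Finite (Option α) :=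
  Finite.of_equiv _ (Equiv.optionEquivSumPUnit.{0,0} α).symm

instance piFinite {X Y A : GSet G} (f : GSetHom X Y) (p : GSetHom A X) :
    Finite (PiCar f p) := by
  unfold PiCar; infer_instance

def piSmul {X Y A : GSet G} (f : GSetHom X Y) (p : GSetHom A X) (g : G)
    (s : PiCar f p) : PiCar f p :=
  ⟨(g • s.val.1, fun x => (s.val.2 (g⁻¹ • x)).map (g • ·)), by
    constructor
    · intro x
      rw [Option.isSome_map, s.property.1 (g⁻¹ • x), f.map_smul]
      constructor
      · intro h; rw [← h, smul_inv_smul]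
      · intro h; rw [h, inv_smul_smul]
    · intro x a ha
      rcases Option.map_eq_some_iff.mp ha with ⟨b, hb, rfl⟩
      rw [p.map_smul, s.property.2 _ _ hb, smul_inv_smul]⟩

instance piAction {X Y A : GSet G} (f : GSetHom X Y) (p : GSetHom A X) :
    MulAction G (PiCar f p) where
  smul := piSmul f p
  one_smul s := by
    apply Subtype.ext
    refine Prod.ext (one_smul G s.val.1) ?_
    funext x
    show (s.val.2 ((1:G)⁻¹ • x)).map ((1:G) • ·) = s.val.2 x
    rw [inv_one, one_smul]
    cases h : s.val.2 x <;> simp [one_smul]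
  mul_smul a b s := by
    apply Subtype.ext
    refine Prod.ext (mul_smul a b s.val.1) ?_
    funext x
    show (s.val.2 ((a * b)⁻¹ • x)).map ((a * b) • ·)
        = ((s.val.2 (b⁻¹ • (a⁻¹ • x))).map (b • ·)).map (a • ·)
    rw [Option.map_map, mul_inv_rev, mul_smul]
    cases h : s.val.2 (b⁻¹ • a⁻¹ • x) <;> simp [mul_smul, Function.comp]

/-- Tambara's dependent product `Π_f(A)` as a `G`-set. -/
def piObj {X Y A : GSet G} (f : GSetHom X Y) (p : GSetHom A X) : GSet G where
  carrier := PiCar f p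

/-- The projection `π : Π_f(A) → Y`. -/
def piPr {X Y A : GSet G} (f : GSetHom X Y) (p : GSetHom A X) :
    GSetHom (piObj f p) Y := ⟨fun s => s.val.1, fun _ _ => rfl⟩

theorem optGet {α : Type} {o : Option α} {a : α} (h : o = some a) :
    ∀ hs : o.isSome = true, o.get hs = a := by subst h; intro _; rfl

/-- The evaluation map `λ : X ×_Y Π_f(A) → A`, `(x, (y, σ)) ↦ σ(x)`. -/
def piEval {X Y A : GSet G} (f : GSetHom X Y) (p : GSetHom A X) :
    GSetHom (pullback f (piPr f p)) A where
  toFun z := (z.val.2.val.2 z.val.1).get (by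
    rw [z.val.2.property.1 z.val.1]; exact z.property)
  map_smul g z := by
    have hs : (z.val.2.val.2 z.val.1).isSome = true := by
      rw [z.val.2.property.1 z.val.1]; exact z.property
    obtain ⟨a, ha⟩ := Option.isSome_iff_exists.mp hs
    have h1 : z.val.2.val.2 z.val.1 = some a := ha
    have h2 : (g • z).val.2.val.2 (g • z).val.1 = some (g • a) := by
      show (z.val.2.val.2 (g⁻¹ • (g • z.val.1))).map (g • ·) = some (g • a)
      rw [inv_smul_smul, h1]; rfl
    simp only [optGet h2, optGet h1]

end GSet

namespace GSet

/-- A transitive (nonempty) finite `G`-set. -/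
def IsTransitive {G : Type} [Group G] (X : GSet G) : Prop :=
  Nonempty X.carrier ∧ MulAction.IsPretransitive G X.carrier

end GSet

/-! Tambara functors -/

/-- The underlying system of commutative rings of a Tambara functor. -/
structure TamData (G : Type) [Group G] : Type 1 where
  obj : GSet G → Type
  ring : ∀ X, CommRing (obj X)

attribute [instance] TamData.ring

/-- A Tambara functor on the finite group `G`: a system of commutative rings `obj X`
indexed by finite `G`-sets, together with restrictions `res`, additive transfers `tr`
and multiplicative transfers `nm`, functorial, additive, satisfying the Mackey
base-change conditions, the projection formula, and Tambara's distributive law. -/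
structure TambaraFunctor (G : Type) [Group G] extends TamData G where
  res : ∀ {X Y : GSet G}, GSetHom X Y → (obj Y →+* obj X)
  tr : ∀ {X Y : GSet G}, GSetHom X Y → (obj X →+ obj Y)
  nm : ∀ {X Y : GSet G}, GSetHom X Y → (obj X →* obj Y)
  res_id : ∀ {X : GSet G} (x : obj X), res (GSetHom.id X) x = x
  res_comp : ∀ {X Y Z : GSet G} (f : GSetHom X Y) (g : GSetHom Y Z) (z : obj Z),
    res f (res g z) = res (g.comp f) z
  tr_id : ∀ {X : GSet G} (x : obj X), tr (GSetHom.id X) x = x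
  tr_comp : ∀ {X Y Z : GSet G} (f : GSetHom X Y) (g : GSetHom Y Z) (x : obj X),
    tr g (tr f x) = tr (g.comp f) x
  nm_id : ∀ {X : GSet G} (x : obj X), nm (GSetHom.id X) x = x
  nm_comp : ∀ {X Y Z : GSet G} (f : GSetHom X Y) (g : GSetHom Y Z) (x : obj X),
    nm g (nm f x) = nm (g.comp f) x
  /-- additivity on binary disjoint unions -/
  add_bij : ∀ X Y : GSet G, Function.Bijective
    (fun t : obj (X.sum Y) => (res (GSet.inl X Y) t, res (GSet.inr X Y) t))
  /-- `T(∅)` is the zero ring -/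
  empty_subsingleton : ∀ x y : obj (GSet.empty G), x = y
  /-- Mackey base change for the additive transfer -/
  tr_bc : ∀ {X Y Z : GSet G} (f : GSetHom X Z) (g : GSetHom Y Z) (x : obj X),
    res g (tr f x) = tr (GSet.pbSnd f g) (res (GSet.pbFst f g) x)
  /-- Mackey base change for the multiplicative transfer -/
  nm_bc : ∀ {X Y Z : GSet G} (f : GSetHom X Z) (g : GSetHom Y Z) (x : obj X),
    res g (nm f x) = nm (GSet.pbSnd f g) (res (GSet.pbFst f g) x)
  /-- the projection formula -/
  proj_formula : ∀ {X Y : GSet G} (f : GSetHom X Y) (a : obj X) (b : obj Y),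
    tr f (a * res f b) = tr f a * b
  /-- the norm of zero is the additive transfer of `1` from the complement of the image -/
  nm_zero : ∀ {X Y : GSet G} (f : GSetHom X Y), nm f (0 : obj X) = tr (GSet.complIncl f) 1
  /-- Tambara's distributive law, via the canonical exponential diagram on `Π_f(A)` -/
  distrib : ∀ {X Y A : GSet G} (f : GSetHom X Y) (p : GSetHom A X) (a : obj A),
    nm f (tr p a) = tr (GSet.piPr f p)
      (nm (GSet.pbSnd f (GSet.piPr f p)) (res (GSet.piEval f p) a))

namespace TambaraFunctor

variable {G : Type} [Group G]

/-- `f_!(x) = f_•(x) - f_•(0)`. -/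
def shriek (T : TambaraFunctor G) {X Y : GSet G} (f : GSetHom X Y) (x : T.obj X) :
    T.obj Y := T.nm f x - T.nm f 0

end TambaraFunctor

/-- A morphism of Tambara functors: a family of ring homomorphisms natural with respect
to restrictions, additive transfers and multiplicative transfers. -/
structure TamHom {G : Type} [Group G] (T S : TambaraFunctor G) where
  app : ∀ X : GSet G, T.obj X →+* S.obj X
  app_res : ∀ {X Y : GSet G} (f : GSetHom X Y) (y : T.obj Y),
    app X (T.res f y) = S.res f (app Y y)
  app_tr : ∀ {X Y : GSet G} (f : GSetHom X Y) (x : T.obj X),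
    app Y (T.tr f x) = S.tr f (app X x)
  app_nm : ∀ {X Y : GSet G} (f : GSetHom X Y) (x : T.obj X),
    app Y (T.nm f x) = S.nm f (app X x)

namespace TambaraFunctor

variable {G : Type} [Group G]

/-- An ideal of a Tambara functor: a family of ideals closed under restrictions,
additive transfers, and satisfying `f_•(𝔦(X)) ⊆ f_•(0) + 𝔦(Y)`
(equivalently, closed under `f_!`). -/
structure IsIdeal (T : TambaraFunctor G) (I : ∀ X : GSet G, Ideal (T.obj X)) : Prop where
  res_mem : ∀ {X Y : GSet G} (f : GSetHom X Y) {y : T.obj Y}, y ∈ I Y → T.res f y ∈ I X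
  tr_mem : ∀ {X Y : GSet G} (f : GSetHom X Y) {x : T.obj X}, x ∈ I X → T.tr f x ∈ I Y
  shriek_mem : ∀ {X Y : GSet G} (f : GSetHom X Y) {x : T.obj X},
    x ∈ I X → T.shriek f x ∈ I Y

/-- The ideal generated by a family of subsets: the intersection of all ideals
containing it. -/
def gen (T : TambaraFunctor G) (S : ∀ X : GSet G, Set (T.obj X)) (X : GSet G) :
    Ideal (T.obj X) :=
  ⨅ (I : ∀ Y : GSet G, Ideal (T.obj Y)) (_ : T.IsIdeal I) (_ : ∀ Y, S Y ⊆ ↑(I Y)), I X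

/-- The family of subsets consisting of the single element `a ∈ T(A)`. -/
def single (T : TambaraFunctor G) (A : GSet G) (a : T.obj A) (X : GSet G) :
    Set (T.obj X) := { x | ∃ h : A = X, h ▸ a = x }

/-- The principal ideal `⟨a⟩` generated by `a ∈ T(A)`. -/
def principal (T : TambaraFunctor G) (A : GSet G) (a : T.obj A) :
    ∀ X : GSet G, Ideal (T.obj X) := T.gen (T.single A a)

/-- The defining set of the product of two ideals. -/
def mulSet (T : TambaraFunctor G) (I J : ∀ X : GSet G, Ideal (T.obj X)) (X : GSet G) :
    Set (T.obj X) :=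
  { x | ∃ (A : GSet G) (p : GSetHom A X) (a b : T.obj A),
      a ∈ I A ∧ b ∈ J A ∧ x = T.tr p (a * b) }

/-- The product of two ideals of a Tambara functor. -/
def mulIdl (T : TambaraFunctor G) (I J : ∀ X : GSet G, Ideal (T.obj X)) (X : GSet G) :
    Ideal (T.obj X) := Ideal.span (T.mulSet I J X)

/-- Iterated products of ideals. -/
def mulMulti (T : TambaraFunctor G) :
    List (∀ X : GSet G, Ideal (T.obj X)) → ∀ X : GSet G, Ideal (T.obj X)
  | [] => fun _ => ⊤
  | I :: ls => T.mulIdl I (T.mulMulti ls)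

/-- A prime ideal of a Tambara functor. -/
structure IsPrime (T : TambaraFunctor G) (P : ∀ X : GSet G, Ideal (T.obj X)) : Prop where
  isIdeal : T.IsIdeal P
  ne_top : ∃ X : GSet G, P X ≠ ⊤
  mem_or_mem : ∀ {X Y : GSet G}, X.IsTransitive → Y.IsTransitive →
    ∀ {a : T.obj X} {b : T.obj Y},
      (∀ Z : GSet G, T.mulIdl (T.principal X a) (T.principal Y b) Z ≤ P Z) →
      a ∈ P X ∨ b ∈ P Y

/-- A maximal ideal of a Tambara functor. -/
structure IsMaximal (T : TambaraFunctor G) (M : ∀ X : GSet G, Ideal (T.obj X)) : Prop where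
  isIdeal : T.IsIdeal M
  ne_top : ∃ X : GSet G, M X ≠ ⊤
  eq_of_le : ∀ K : ∀ X : GSet G, Ideal (T.obj X), T.IsIdeal K →
    (∀ X, M X ≤ K X) → (K = M ∨ ∀ X, K X = ⊤)

end TambaraFunctor

namespace GSet

/-- The `G`-set `G/e`, i.e. `G` with the left regular action. -/
def regular (G : Type) [Group G] [Finite G] : GSet G where
  carrier := G

/-- Right multiplication `G/e → G/e`, an equivariant map. -/
def rightMul {G : Type} [Group G] [Finite G] (g : G) :
    GSetHom (regular G) (regular G) :=
  ⟨fun x => (id x : G) * g, fun a x => mul_assoc a x g⟩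

end GSet

/-- The radical of an ideal of a Tambara functor:
`(√𝔦)(X) = { a | ⟨a⟩ⁿ ⊆ 𝔦 for some n ≥ 1 }`. -/
def TambaraFunctor.radicalSet {G : Type} [Group G] (T : TambaraFunctor G)
    (I : ∀ X : GSet G, Ideal (T.obj X)) (X : GSet G) : Set (T.obj X) :=
  { a | ∃ n : ℕ, 0 < n ∧
      ∀ Y : GSet G, T.mulMulti (List.replicate n (T.principal X a)) Y ≤ I Y }

/-!
Everything rests on sums and products of ideals being ideals again, i.e. on their closure
under `f_! = f_• - f_•(0)`. Call `x` shriek-stable for `M` when `M` contains every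
`q_!(s_*(r^* x))`. Writing `x + y` as the transfer of `(x, y)` along the fold map `X ⊔ X → X`,
the distributive law shows that `f_!(x + y) ∈ M` for stable `x` and `y`: split the exponential
diagram according to the summand the evaluation lands in, and the norm factors over the two
pieces. Similarly `f_!(p_*(a b)) ∈ 𝔦𝔧`, since over the image of the relevant map the shriek is a
multiplicative norm.

Then `⟨a + b⟩ ⊆ ⟨a⟩ + ⟨b⟩` and the binomial bound `(𝔞 + 𝔟)ⁿ⁺ᵐ ⊆ 𝔞ⁿ + 𝔟ᵐ` make `√𝔦` closed under
addition, while `c ∈ ⟨a⟩` gives `⟨c⟩ⁿ ⊆ ⟨a⟩ⁿ` for the other closure properties. Finally,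
containment in an ideal can be tested on transitive `G`-sets (split off an orbit), where
primality removes the factors of `⟨a⟩ⁿ ⊆ 𝔭` one at a time.
-/

theorem GSetHom.ext {G : Type} [Group G] {X Y : GSet G} {f g : GSetHom X Y}
    (h : ∀ x, f.toFun x = g.toFun x) : f = g := by
  cases f; cases g; congr; funext x; exact h x

namespace GSet

variable {G : Type} [Group G]

def IsInvariant {X : GSet G} (S : Set X.carrier) : Prop :=
  ∀ (g : G) (x : X.carrier), g • x ∈ S ↔ x ∈ S

theorem IsInvariant.compl {X : GSet G} {S : Set X.carrier} (hS : IsInvariant S) :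
    IsInvariant Sᶜ :=
  fun g x => not_congr (hS g x)

theorem isInvariant_orbit {X : GSet G} (u : X.carrier) : IsInvariant (MulAction.orbit G u) :=
  fun g x => by rw [← MulAction.orbit_eq_iff, MulAction.orbit_smul, MulAction.orbit_eq_iff]

theorem isInvariant_range {X Y : GSet G} (f : GSetHom X Y) : IsInvariant (Set.range f.toFun) :=
  fun g y => ⟨fun ⟨x, hx⟩ => ⟨g⁻¹ • x, by rw [f.map_smul, hx, inv_smul_smul]⟩,
    fun ⟨x, hx⟩ => ⟨g • x, by rw [f.map_smul, hx]⟩⟩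

theorem IsInvariant.preimage {X Y : GSet G} {S : Set Y.carrier} (hS : IsInvariant S)
    (f : GSetHom X Y) : IsInvariant (f.toFun ⁻¹' S) :=
  fun g x => by rw [Set.mem_preimage, f.map_smul, hS, Set.mem_preimage]

def sub (X : GSet G) (S : Set X.carrier) (hS : IsInvariant S) : GSet G where
  carrier := S
  mulAction :=
  { smul := fun g x => ⟨g • x.val, (hS g x.val).2 x.property⟩
    one_smul := fun x => Subtype.ext (one_smul G x.val)
    mul_smul := fun a b x => Subtype.ext (mul_smul a b x.val) }

def subIncl {X : GSet G} {S : Set X.carrier} (hS : IsInvariant S) : GSetHom (X.sub S hS) X :=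
  ⟨Subtype.val, fun _ _ => rfl⟩

theorem subIncl_injective {X : GSet G} {S : Set X.carrier} (hS : IsInvariant S) :
    Function.Injective (subIncl hS).toFun :=
  Subtype.val_injective

def sumSub {X : GSet G} {S : Set X.carrier} (hS : IsInvariant S) :
    GSetHom ((X.sub S hS).sum (X.sub Sᶜ hS.compl)) X :=
  ⟨Sum.elim Subtype.val Subtype.val, by rintro g (x | x) <;> rfl⟩

open Classical in
noncomputable def subSum {X : GSet G} {S : Set X.carrier} (hS : IsInvariant S) :
    GSetHom X ((X.sub S hS).sum (X.sub Sᶜ hS.compl)) where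
  toFun x := (if h : x ∈ S then .inl ⟨x, h⟩ else .inr ⟨x, h⟩ :
    (X.sub S hS).carrier ⊕ (X.sub Sᶜ hS.compl).carrier)
  map_smul g x := by
    by_cases h : x ∈ S
    · rw [dif_pos ((hS g x).2 h), dif_pos h]; rfl
    · rw [dif_neg (mt (hS g x).1 h), dif_neg h]; rfl

theorem sumSub_comp_subSum {X : GSet G} {S : Set X.carrier} (hS : IsInvariant S) :
    (sumSub hS).comp (subSum hS) = GSetHom.id X := by
  classical
  refine GSetHom.ext fun x => ?_
  by_cases h : x ∈ S
  · change Sum.elim _ _ (dite _ _ _) = x; rw [dif_pos h]; rfl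
  · change Sum.elim _ _ (dite _ _ _) = x; rw [dif_neg h]; rfl

def fold (X : GSet G) : GSetHom (X.sum X) X :=
  ⟨Sum.elim id id, by rintro g (x | x) <;> rfl⟩

theorem fold_comp_inl (X : GSet G) : (fold X).comp (inl X X) = GSetHom.id X :=
  GSetHom.ext fun _ => rfl

theorem fold_comp_inr (X : GSet G) : (fold X).comp (inr X X) = GSetHom.id X :=
  GSetHom.ext fun _ => rfl

def pbDiag {U X : GSet G} (k : GSetHom U X) : GSetHom U (pullback k k) :=
  ⟨fun u => ⟨(u, u), rfl⟩, fun _ _ => rfl⟩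

theorem pbDiag_injective {U X : GSet G} (k : GSetHom U X) :
    Function.Injective (pbDiag k).toFun :=
  fun _ _ h => congrArg (fun q => q.val.1) h

theorem pbFst_comp_pbDiag {U X : GSet G} (k : GSetHom U X) :
    (pbFst k k).comp (pbDiag k) = GSetHom.id U :=
  GSetHom.ext fun _ => rfl

theorem pbSnd_eq_pbFst {U X : GSet G} {k : GSetHom U X} (hk : Function.Injective k.toFun) :
    pbSnd k k = pbFst k k :=
  GSetHom.ext fun q => (hk q.property).symm

theorem pbDiag_comp_pbFst {U X : GSet G} {k : GSetHom U X} (hk : Function.Injective k.toFun) :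
    (pbDiag k).comp (pbFst k k) = GSetHom.id (pullback k k) :=
  GSetHom.ext fun q => Subtype.ext (Prod.ext rfl (hk q.property))

theorem isEmpty_pullback {U V X : GSet G} {f : GSetHom U X} {g : GSetHom V X}
    (h : ∀ u v, f.toFun u ≠ g.toFun v) : IsEmpty (pullback f g).carrier :=
  ⟨fun q => h _ _ q.property⟩

end GSet

namespace TambaraFunctor

variable {G : Type} [Group G] (T : TambaraFunctor G)

open GSet

theorem subsingleton_obj {X : GSet G} (hX : IsEmpty X.carrier) : Subsingleton (T.obj X) := by
  let e : GSetHom X (GSet.empty G) := ⟨hX.elim, fun _ x => hX.elim x⟩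
  let e' : GSetHom (GSet.empty G) X := ⟨Empty.elim, fun _ x => x.elim⟩
  have hid : e'.comp e = GSetHom.id X := GSetHom.ext fun x => hX.elim x
  refine ⟨fun a b => ?_⟩
  rw [← T.res_id a, ← T.res_id b, ← hid, ← T.res_comp, ← T.res_comp,
    T.empty_subsingleton (T.res e' a)]

theorem tr_of_isEmpty {X Y : GSet G} (f : GSetHom X Y) (hX : IsEmpty X.carrier)
    (x : T.obj X) : T.tr f x = 0 := by
  have := T.subsingleton_obj hX
  rw [Subsingleton.elim x 0, map_zero]

theorem nm_of_isEmpty {X Y : GSet G} (f : GSetHom X Y) (hX : IsEmpty X.carrier)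
    (x : T.obj X) : T.nm f x = 1 := by
  have := T.subsingleton_obj hX
  rw [Subsingleton.elim x 1, map_one]

theorem res_tr_of_disjoint {U V X : GSet G} {f : GSetHom U X} {g : GSetHom V X}
    (h : ∀ u v, f.toFun u ≠ g.toFun v) (x : T.obj U) : T.res g (T.tr f x) = 0 := by
  rw [T.tr_bc, T.tr_of_isEmpty _ (isEmpty_pullback h)]

theorem res_nm_of_disjoint {U V X : GSet G} {f : GSetHom U X} {g : GSetHom V X}
    (h : ∀ u v, f.toFun u ≠ g.toFun v) (x : T.obj U) : T.res g (T.nm f x) = 1 := by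
  rw [T.nm_bc, T.nm_of_isEmpty _ (isEmpty_pullback h)]

theorem res_nm_of_injective {U X : GSet G} {k : GSetHom U X} (hk : Function.Injective k.toFun)
    (x : T.obj U) : T.res k (T.nm k x) = T.nm (pbFst k k) (T.res (pbFst k k) x) := by
  rw [T.nm_bc, pbSnd_eq_pbFst hk]

/-- Transfers and norms along an isomorphism need not invert restriction, so the inverse of
`res k ∘ tr k` (and of `res k ∘ nm k`) for injective `k` is written out through the diagonal. -/
theorem res_tr_res_tr {U X : GSet G} {k : GSetHom U X} (hk : Function.Injective k.toFun)
    (x : T.obj U) : T.res k (T.tr k (T.res (pbDiag k) (T.tr (pbDiag k) x))) = x := by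
  rw [T.tr_bc, pbSnd_eq_pbFst hk, T.res_comp, pbDiag_comp_pbFst hk, T.res_id, T.tr_comp,
    pbFst_comp_pbDiag, T.tr_id]

theorem res_nm_res_nm {U X : GSet G} {k : GSetHom U X} (hk : Function.Injective k.toFun)
    (x : T.obj U) : T.res k (T.nm k (T.res (pbDiag k) (T.nm (pbDiag k) x))) = x := by
  rw [T.res_nm_of_injective hk, T.res_comp, pbDiag_comp_pbFst hk, T.res_id, T.nm_comp,
    pbFst_comp_pbDiag, T.nm_id]

section Decomposition

variable {X : GSet G} {S : Set X.carrier} (hS : IsInvariant S)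

theorem subIncl_disjoint : ∀ u v, (subIncl hS).toFun u ≠ (subIncl hS.compl).toFun v :=
  fun u v (h : u.val = v.val) => v.property (h ▸ u.property)

theorem eq_of_res_subIncl {x y : T.obj X} (hin : T.res (subIncl hS) x = T.res (subIncl hS) y)
    (hout : T.res (subIncl hS.compl) x = T.res (subIncl hS.compl) y) : x = y := by
  have hres : ∀ z : T.obj X, T.res (subSum hS) (T.res (sumSub hS) z) = z := fun z => by
    rw [T.res_comp, sumSub_comp_subSum, T.res_id]
  rw [← hres x, ← hres y]
  congr 1
  refine (T.add_bij _ _).injective (Prod.ext ?_ ?_)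
  · change T.res (inl _ _) (T.res (sumSub hS) x) = T.res (inl _ _) (T.res (sumSub hS) y)
    rwa [T.res_comp, T.res_comp]
  · change T.res (inr _ _) (T.res (sumSub hS) x) = T.res (inr _ _) (T.res (sumSub hS) y)
    rwa [T.res_comp, T.res_comp]

theorem mem_of_res_subIncl_mem {M : ∀ X : GSet G, Ideal (T.obj X)}
    (hres : ∀ {U V : GSet G} (f : GSetHom U V) {y : T.obj V}, y ∈ M V → T.res f y ∈ M U)
    (htr : ∀ {U V : GSet G} (f : GSetHom U V) {x : T.obj U}, x ∈ M U → T.tr f x ∈ M V)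
    {x : T.obj X} (hin : T.res (subIncl hS) x ∈ M _)
    (hout : T.res (subIncl hS.compl) x ∈ M _) : x ∈ M X := by
  set k₁ := subIncl hS
  set k₂ := subIncl hS.compl
  have hx : x = T.tr k₁ (T.res (pbDiag k₁) (T.tr (pbDiag k₁) (T.res k₁ x))) +
      T.tr k₂ (T.res (pbDiag k₂) (T.tr (pbDiag k₂) (T.res k₂ x))) := by
    refine T.eq_of_res_subIncl hS ?_ ?_
    · rw [map_add, T.res_tr_res_tr (subIncl_injective hS),
        T.res_tr_of_disjoint (fun u v h => subIncl_disjoint hS v u h.symm), add_zero]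
    · rw [map_add, T.res_tr_res_tr (subIncl_injective hS.compl),
        T.res_tr_of_disjoint (subIncl_disjoint hS), zero_add]
  rw [hx]
  exact add_mem (htr _ (hres _ (htr _ hin))) (htr _ (hres _ (htr _ hout)))

/-- The isomorphisms `r₁`, `r₂` cannot be dropped: a norm along an isomorphism need not be a
restriction. -/
theorem exists_nm_eq_mul {V : GSet G} (q : GSetHom X V) :
    ∃ (W₁ W₂ : GSet G) (g₁ : GSetHom W₁ V) (r₁ : GSetHom W₁ (X.sub S hS))
      (g₂ : GSetHom W₂ V) (r₂ : GSetHom W₂ (X.sub Sᶜ hS.compl)),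
      ∀ e : T.obj X, T.nm q e = T.nm g₁ (T.res r₁ (T.res (subIncl hS) e)) *
        T.nm g₂ (T.res r₂ (T.res (subIncl hS.compl) e)) := by
  set k₁ := subIncl hS
  set k₂ := subIncl hS.compl
  set δ₁ := pbDiag k₁
  set δ₂ := pbDiag k₂
  refine ⟨_, _, (q.comp k₁).comp (pbFst δ₁ δ₁), pbFst δ₁ δ₁,
    (q.comp k₂).comp (pbFst δ₂ δ₂), pbFst δ₂ δ₂, fun e => ?_⟩
  have he : e = T.nm k₁ (T.res δ₁ (T.nm δ₁ (T.res k₁ e))) *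
      T.nm k₂ (T.res δ₂ (T.nm δ₂ (T.res k₂ e))) := by
    refine T.eq_of_res_subIncl hS ?_ ?_
    · rw [map_mul, T.res_nm_res_nm (subIncl_injective hS),
        T.res_nm_of_disjoint (fun u v h => subIncl_disjoint hS v u h.symm), mul_one]
    · rw [map_mul, T.res_nm_res_nm (subIncl_injective hS.compl),
        T.res_nm_of_disjoint (subIncl_disjoint hS), one_mul]
  conv_lhs => rw [he]
  rw [map_mul, T.res_nm_of_injective (pbDiag_injective k₁),
    T.res_nm_of_injective (pbDiag_injective k₂), T.nm_comp, T.nm_comp, T.nm_comp, T.nm_comp]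

end Decomposition

theorem shriek_zero {X Y : GSet G} (f : GSetHom X Y) : T.shriek f 0 = 0 :=
  sub_self _

theorem shriek_of_isEmpty {X Y : GSet G} (f : GSetHom X Y) (hX : IsEmpty X.carrier)
    (x : T.obj X) : T.shriek f x = 0 := by
  rw [shriek, T.nm_of_isEmpty f hX, T.nm_of_isEmpty f hX, sub_self]

theorem shriek_eq_nm {X Y : GSet G} {f : GSetHom X Y} (hf : Function.Surjective f.toFun)
    (x : T.obj X) : T.shriek f x = T.nm f x := by
  have hcompl : IsEmpty (compl f).carrier := ⟨fun y => (hf y.val).elim y.property⟩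
  rw [shriek, T.nm_zero, T.tr_of_isEmpty _ hcompl, sub_zero]

theorem res_shriek {X Y Z : GSet G} (f : GSetHom X Z) (g : GSetHom Y Z) (x : T.obj X) :
    T.res g (T.shriek f x) = T.shriek (pbSnd f g) (T.res (pbFst f g) x) := by
  rw [shriek, shriek, map_sub, T.nm_bc, T.nm_bc, map_zero]

theorem shriek_tr {X Y A : GSet G} (f : GSetHom X Y) (p : GSetHom A X) (a : T.obj A) :
    T.shriek f (T.tr p a) =
      T.tr (piPr f p) (T.shriek (pbSnd f (piPr f p)) (T.res (piEval f p) a)) := by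
  have h0 := T.distrib f p 0
  rw [map_zero (T.tr p), map_zero (T.res _)] at h0
  rw [shriek, shriek, h0, T.distrib, map_sub]

def IsShriekStable (M : ∀ X : GSet G, Ideal (T.obj X)) {X : GSet G} (x : T.obj X) : Prop :=
  ∀ ⦃Z₁ Z₂ V : GSet G⦄ (r : GSetHom Z₁ X) (s : GSetHom Z₁ Z₂) (q : GSetHom Z₂ V),
    T.shriek q (T.tr s (T.res r x)) ∈ M V

variable {T} {M : ∀ X : GSet G, Ideal (T.obj X)}

namespace IsShriekStable

variable {X : GSet G} {x : T.obj X}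

theorem shriek_res_mem (hx : T.IsShriekStable M x) {Z V : GSet G} (r : GSetHom Z X)
    (q : GSetHom Z V) : T.shriek q (T.res r x) ∈ M V := by
  simpa only [T.tr_id] using hx r (GSetHom.id Z) q

theorem shriek_mem (hx : T.IsShriekStable M x) {V : GSet G} (q : GSetHom X V) :
    T.shriek q x ∈ M V := by
  simpa only [T.res_id] using hx.shriek_res_mem (GSetHom.id X) q

theorem res (hx : T.IsShriekStable M x) {W : GSet G} (f : GSetHom W X) :
    T.IsShriekStable M (T.res f x) :=
  fun _ _ _ r s q => by rw [T.res_comp]; exact hx _ s q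

theorem tr (hx : T.IsShriekStable M x) {W : GSet G} (f : GSetHom X W) :
    T.IsShriekStable M (T.tr f x) :=
  fun _ _ _ r s q => by rw [T.tr_bc, T.tr_comp]; exact hx _ _ q

end IsShriekStable

theorem isShriekStable_zero (X : GSet G) : T.IsShriekStable M (0 : T.obj X) :=
  fun _ _ _ r s q => by rw [map_zero, map_zero, T.shriek_zero]; exact zero_mem _

theorem IsIdeal.isShriekStable {A : ∀ X : GSet G, Ideal (T.obj X)} (hA : T.IsIdeal A)
    (hAM : A ≤ M) {X : GSet G} {x : T.obj X} (hx : x ∈ A X) : T.IsShriekStable M x :=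
  fun _ _ _ r s q => hAM _ (hA.shriek_mem q (hA.tr_mem s (hA.res_mem r hx)))

/-- `q_! e = q_• e - q_• 0`, and both norms factor over the two parts by `exists_nm_eq_mul`. -/
theorem shriek_mem_of_isShriekStable_res {X V : GSet G} {S : Set X.carrier}
    (hS : IsInvariant S) (q : GSetHom X V) {e : T.obj X}
    (h₁ : T.IsShriekStable M (T.res (subIncl hS) e))
    (h₂ : T.IsShriekStable M (T.res (subIncl hS.compl) e)) : T.shriek q e ∈ M V := by
  obtain ⟨W₁, W₂, g₁, r₁, g₂, r₂, hnm⟩ := T.exists_nm_eq_mul hS q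
  have key : T.shriek q e =
      T.shriek g₁ (T.res r₁ (T.res (subIncl hS) e)) *
        T.nm g₂ (T.res r₂ (T.res (subIncl hS.compl) e)) +
      T.nm g₁ 0 * T.shriek g₂ (T.res r₂ (T.res (subIncl hS.compl) e)) := by
    rw [shriek, shriek, shriek, hnm e, hnm 0, map_zero (T.res _), map_zero (T.res _),
      map_zero (T.res _), map_zero (T.res _)]
    ring
  rw [key]
  exact add_mem (Ideal.mul_mem_right _ _ (h₁.shriek_res_mem r₁ g₁))
    (Ideal.mul_mem_left _ _ (h₂.shriek_res_mem r₂ g₂))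

/-- Apply the distributive law to `x + y`, the transfer of `(x, y)` along the fold map
`X ⊔ X → X`, and split the exponential diagram by the copy of `X` the evaluation lands in. -/
theorem shriek_add_mem
    (htr : ∀ {U V : GSet G} (f : GSetHom U V) {x : T.obj U}, x ∈ M U → T.tr f x ∈ M V)
    {X Y : GSet G} (f : GSetHom X Y) {x y : T.obj X} (hx : T.IsShriekStable M x)
    (hy : T.IsShriekStable M y) : T.shriek f (x + y) ∈ M Y := by
  set w := T.tr (inl X X) x + T.tr (inr X X) y
  have hw : T.tr (fold X) w = x + y := by
    rw [map_add, T.tr_comp, T.tr_comp, fold_comp_inl, fold_comp_inr, T.tr_id, T.tr_id]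
  set ev := piEval f (fold X)
  have hS : IsInvariant (ev.toFun ⁻¹' Set.range (inl X X).toFun) :=
    (isInvariant_range _).preimage ev
  rw [← hw, T.shriek_tr]
  refine htr _ (T.shriek_mem_of_isShriekStable_res hS _ ?_ ?_)
  · have hdisj : ∀ u v, (inr X X).toFun u ≠ (ev.comp (subIncl hS)).toFun v :=
      fun u v h => Sum.inl_ne_inr (v.property.choose_spec.trans h.symm)
    rw [T.res_comp, map_add, T.res_tr_of_disjoint hdisj, add_zero]
    exact (hx.tr _).res _
  · have hdisj : ∀ u v, (inl X X).toFun u ≠ (ev.comp (subIncl hS.compl)).toFun v :=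
      fun u v h => v.property ⟨u, h⟩
    rw [T.res_comp, map_add, T.res_tr_of_disjoint hdisj, zero_add]
    exact (hy.tr _).res _

theorem IsShriekStable.add
    (htr : ∀ {U V : GSet G} (f : GSetHom U V) {x : T.obj U}, x ∈ M U → T.tr f x ∈ M V)
    {X : GSet G} {x y : T.obj X} (hx : T.IsShriekStable M x) (hy : T.IsShriekStable M y) :
    T.IsShriekStable M (x + y) :=
  fun _ _ _ r s q => by
    rw [map_add, map_add]
    exact shriek_add_mem htr q ((hx.res r).tr s) ((hy.res r).tr s)

end TambaraFunctor

namespace TambaraFunctor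

variable {G : Type} [Group G] (T : TambaraFunctor G)

theorem isIdeal_top : T.IsIdeal ⊤ :=
  ⟨fun _ _ _ => Submodule.mem_top, fun _ _ _ => Submodule.mem_top,
    fun _ _ _ => Submodule.mem_top⟩

theorem mem_gen_iff {S : ∀ X : GSet G, Set (T.obj X)} {X : GSet G} {x : T.obj X} :
    x ∈ T.gen S X ↔ ∀ J : ∀ Y : GSet G, Ideal (T.obj Y),
      T.IsIdeal J → (∀ Y, S Y ⊆ J Y) → x ∈ J X := by
  simp only [gen, Submodule.mem_iInf]

theorem isIdeal_gen (S : ∀ X : GSet G, Set (T.obj X)) : T.IsIdeal (T.gen S) where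
  res_mem f _ hy := T.mem_gen_iff.2 fun J hJ hS => hJ.res_mem f (T.mem_gen_iff.1 hy J hJ hS)
  tr_mem f _ hx := T.mem_gen_iff.2 fun J hJ hS => hJ.tr_mem f (T.mem_gen_iff.1 hx J hJ hS)
  shriek_mem f _ hx :=
    T.mem_gen_iff.2 fun J hJ hS => hJ.shriek_mem f (T.mem_gen_iff.1 hx J hJ hS)

theorem isIdeal_principal {A : GSet G} (a : T.obj A) : T.IsIdeal (T.principal A a) :=
  T.isIdeal_gen _

theorem mem_principal_self {A : GSet G} (a : T.obj A) : a ∈ T.principal A a A :=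
  T.mem_gen_iff.2 fun _ _ hS => hS A ⟨rfl, rfl⟩

theorem principal_le {A : GSet G} {a : T.obj A} {J : ∀ X : GSet G, Ideal (T.obj X)}
    (hJ : T.IsIdeal J) (ha : a ∈ J A) : T.principal A a ≤ J := by
  intro X x hx
  refine T.mem_gen_iff.1 hx J hJ fun Y y hy => ?_
  obtain ⟨rfl, rfl⟩ := hy
  exact ha

variable {T}

theorem IsIdeal.sup {A B : ∀ X : GSet G, Ideal (T.obj X)} (hA : T.IsIdeal A)
    (hB : T.IsIdeal B) : T.IsIdeal (A ⊔ B) := by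
  have htr : ∀ {X Y : GSet G} (f : GSetHom X Y) {x : T.obj X}, x ∈ (A ⊔ B) X →
      T.tr f x ∈ (A ⊔ B) Y := fun f x hx => by
    obtain ⟨u, hu, v, hv, rfl⟩ := Submodule.mem_sup.1 hx
    rw [map_add]
    exact add_mem (Submodule.mem_sup_left (hA.tr_mem f hu))
      (Submodule.mem_sup_right (hB.tr_mem f hv))
  refine ⟨fun f y hy => ?_, htr, fun f x hx => ?_⟩
  · obtain ⟨u, hu, v, hv, rfl⟩ := Submodule.mem_sup.1 hy
    rw [map_add]
    exact add_mem (Submodule.mem_sup_left (hA.res_mem f hu))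
      (Submodule.mem_sup_right (hB.res_mem f hv))
  · obtain ⟨u, hu, v, hv, rfl⟩ := Submodule.mem_sup.1 hx
    exact ((hA.isShriekStable le_sup_left hu).add htr
      (hB.isShriekStable le_sup_right hv)).shriek_mem f

end TambaraFunctor

namespace TambaraFunctor

variable {G : Type} [Group G] {T : TambaraFunctor G} {I J : ∀ X : GSet G, Ideal (T.obj X)}

open GSet

theorem mul_mem_mulSet {X : GSet G} {a b : T.obj X} (ha : a ∈ I X) (hb : b ∈ J X) :
    a * b ∈ T.mulSet I J X :=
  ⟨X, GSetHom.id X, a, b, ha, hb, (T.tr_id _).symm⟩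

theorem mul_mem_mulSet_of_mem {X : GSet G} (c : T.obj X) {z : T.obj X}
    (hz : z ∈ T.mulSet I J X) : c * z ∈ T.mulSet I J X := by
  obtain ⟨A, p, a, b, ha, hb, rfl⟩ := hz
  refine ⟨A, p, T.res p c * a, b, Ideal.mul_mem_left _ _ ha, hb, ?_⟩
  rw [mul_comm c, ← T.proj_formula]
  congr 1
  ring

theorem res_mem_mulSet (hI : T.IsIdeal I) (hJ : T.IsIdeal J) {X Y : GSet G}
    (f : GSetHom X Y) {z : T.obj Y} (hz : z ∈ T.mulSet I J Y) :
    T.res f z ∈ T.mulSet I J X := by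
  obtain ⟨A, p, a, b, ha, hb, rfl⟩ := hz
  rw [T.tr_bc, map_mul]
  exact ⟨_, _, _, _, hI.res_mem _ ha, hJ.res_mem _ hb, rfl⟩

theorem tr_mem_mulSet {X Y : GSet G} (f : GSetHom X Y) {z : T.obj X}
    (hz : z ∈ T.mulSet I J X) : T.tr f z ∈ T.mulSet I J Y := by
  obtain ⟨A, p, a, b, ha, hb, rfl⟩ := hz
  rw [T.tr_comp]
  exact ⟨A, f.comp p, a, b, ha, hb, rfl⟩

theorem res_mem_mulIdl (hI : T.IsIdeal I) (hJ : T.IsIdeal J) {X Y : GSet G}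
    (f : GSetHom X Y) {z : T.obj Y} (hz : z ∈ T.mulIdl I J Y) :
    T.res f z ∈ T.mulIdl I J X := by
  induction hz using Submodule.span_induction with
  | mem z hz => exact Ideal.subset_span (res_mem_mulSet hI hJ f hz)
  | zero => rw [map_zero]; exact zero_mem _
  | add x y _ _ hx hy => rw [map_add]; exact add_mem hx hy
  | smul c z _ hz => rw [smul_eq_mul, map_mul]; exact Ideal.mul_mem_left _ _ hz

theorem tr_mem_mulIdl {X Y : GSet G} (f : GSetHom X Y) {z : T.obj X}
    (hz : z ∈ T.mulIdl I J X) : T.tr f z ∈ T.mulIdl I J Y := by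
  induction hz using Submodule.closure_induction with
  | zero => rw [map_zero]; exact zero_mem _
  | add x y _ _ hx hy => rw [map_add]; exact add_mem hx hy
  | smul_mem c z hz => exact Ideal.subset_span (tr_mem_mulSet f (mul_mem_mulSet_of_mem c hz))

/-- After the distributive law, `q_!` for the map `q` of the exponential diagram is a
multiplicative norm over the image of `q` and vanishes over its complement. -/
theorem shriek_mem_mulIdl (hI : T.IsIdeal I) (hJ : T.IsIdeal J) {X Y : GSet G}
    (g : GSetHom X Y) {z : T.obj X} (hz : z ∈ T.mulSet I J X) :
    T.shriek g z ∈ T.mulIdl I J Y := by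
  obtain ⟨A, p, a, b, ha, hb, rfl⟩ := hz
  rw [T.shriek_tr, map_mul]
  refine tr_mem_mulIdl _ ?_
  set q := pbSnd g (piPr g p)
  have hS := isInvariant_range q
  have hsurj : Function.Surjective (pbSnd q (subIncl hS)).toFun :=
    fun s => ⟨⟨(s.property.choose, s), s.property.choose_spec⟩, rfl⟩
  have hempty : IsEmpty (pullback q (subIncl hS.compl)).carrier :=
    isEmpty_pullback fun u v h => v.property ⟨u, h⟩
  refine T.mem_of_res_subIncl_mem hS (res_mem_mulIdl hI hJ) tr_mem_mulIdl ?_ ?_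
  · rw [T.res_shriek, T.shriek_eq_nm hsurj, map_mul, map_mul, ← T.shriek_eq_nm hsurj,
      ← T.shriek_eq_nm hsurj]
    exact Ideal.subset_span (mul_mem_mulSet (hI.shriek_mem _ (hI.res_mem _ (hI.res_mem _ ha)))
      (hJ.shriek_mem _ (hJ.res_mem _ (hJ.res_mem _ hb))))
  · rw [T.res_shriek, T.shriek_of_isEmpty _ hempty]
    exact zero_mem _

theorem IsIdeal.mulIdl (hI : T.IsIdeal I) (hJ : T.IsIdeal J) : T.IsIdeal (T.mulIdl I J) := by
  refine ⟨res_mem_mulIdl hI hJ, tr_mem_mulIdl, fun f z hz => ?_⟩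
  suffices T.IsShriekStable (T.mulIdl I J) z from this.shriek_mem f
  induction hz using Submodule.closure_induction with
  | zero => exact isShriekStable_zero _
  | add x y _ _ hx hy => exact hx.add tr_mem_mulIdl hy
  | smul_mem c z hz =>
    exact fun _ _ _ r s q => shriek_mem_mulIdl hI hJ q
      (tr_mem_mulSet s (res_mem_mulSet hI hJ r (mul_mem_mulSet_of_mem c hz)))

end TambaraFunctor

namespace TambaraFunctor

variable {G : Type} [Group G] {T : TambaraFunctor G}

theorem mulIdl_mono {I I' J J' : ∀ X : GSet G, Ideal (T.obj X)} (hI : I ≤ I') (hJ : J ≤ J') :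
    T.mulIdl I J ≤ T.mulIdl I' J' := fun _ =>
  Ideal.span_mono fun _ ⟨A, p, a, b, ha, hb, hz⟩ => ⟨A, p, a, b, hI A ha, hJ A hb, hz⟩

theorem mulIdl_comm (I J : ∀ X : GSet G, Ideal (T.obj X)) : T.mulIdl I J = T.mulIdl J I := by
  have hsub : ∀ I' J' : ∀ X : GSet G, Ideal (T.obj X), T.mulIdl I' J' ≤ T.mulIdl J' I' :=
    fun _ _ _ => Ideal.span_mono fun _ ⟨A, p, a, b, ha, hb, hz⟩ =>
      ⟨A, p, b, a, hb, ha, by rw [hz, mul_comm]⟩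
  exact le_antisymm (hsub I J) (hsub J I)

theorem mulIdl_le_left {I J K : ∀ X : GSet G, Ideal (T.obj X)} (hK : T.IsIdeal K)
    (hIK : I ≤ K) : T.mulIdl I J ≤ K := fun _ =>
  Ideal.span_le.2 fun _ ⟨A, p, _, b, ha, _, hz⟩ =>
    hz ▸ hK.tr_mem p (Ideal.mul_mem_right b _ (hIK A ha))

theorem mulIdl_le_right {I J K : ∀ X : GSet G, Ideal (T.obj X)} (hK : T.IsIdeal K)
    (hJK : J ≤ K) : T.mulIdl I J ≤ K :=
  T.mulIdl_comm I J ▸ mulIdl_le_left hK hJK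

theorem mulIdl_sup_le (A B C : ∀ X : GSet G, Ideal (T.obj X)) :
    T.mulIdl (A ⊔ B) C ≤ T.mulIdl A C ⊔ T.mulIdl B C := fun X => by
  refine Ideal.span_le.2 fun _ ⟨W, p, s, c, hs, hc, hz⟩ => ?_
  obtain ⟨u, hu, v, hv, rfl⟩ := Submodule.mem_sup.1 hs
  rw [hz, add_mul, map_add]
  exact add_mem (Submodule.mem_sup_left (Ideal.subset_span ⟨W, p, u, c, hu, hc, rfl⟩))
    (Submodule.mem_sup_right (Ideal.subset_span ⟨W, p, v, c, hv, hc, rfl⟩))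

theorem mulIdl_le_sup (A B C : ∀ X : GSet G, Ideal (T.obj X)) :
    T.mulIdl C (A ⊔ B) ≤ T.mulIdl C A ⊔ T.mulIdl C B := by
  simpa only [T.mulIdl_comm C] using mulIdl_sup_le A B C

variable (T) in
def powIdl (A : ∀ X : GSet G, Ideal (T.obj X)) (n : ℕ) : ∀ X : GSet G, Ideal (T.obj X) :=
  T.mulMulti (List.replicate n A)

variable {A B : ∀ X : GSet G, Ideal (T.obj X)}

theorem powIdl_succ (n : ℕ) : T.powIdl A (n + 1) = T.mulIdl A (T.powIdl A n) := rfl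

theorem IsIdeal.powIdl (hA : T.IsIdeal A) (n : ℕ) : T.IsIdeal (T.powIdl A n) := by
  induction n with
  | zero => exact T.isIdeal_top
  | succ n ih => exact hA.mulIdl ih

theorem powIdl_mono (hAB : A ≤ B) (n : ℕ) : T.powIdl A n ≤ T.powIdl B n := by
  induction n with
  | zero => exact le_rfl
  | succ n ih => exact mulIdl_mono hAB ih

/-- Peel off one factor `A ⊔ B` and use the bounds for `(n - 1, m)` and `(n, m - 1)`. -/
theorem powIdl_sup_le (hA : T.IsIdeal A) (hB : T.IsIdeal B) (n m : ℕ) :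
    T.powIdl (A ⊔ B) (n + m) ≤ T.powIdl A n ⊔ T.powIdl B m := by
  induction h : n + m generalizing n m with
  | zero =>
    obtain ⟨rfl, rfl⟩ : n = 0 ∧ m = 0 := by omega
    exact le_sup_left
  | succ k ih =>
    rcases n with _ | n
    · exact le_sup_of_le_left le_top
    rcases m with _ | m
    · exact le_sup_of_le_right le_top
    have hAk := ih n (m + 1) (by omega)
    have hBk := ih (n + 1) m (by omega)
    rw [powIdl_succ]
    refine (mulIdl_sup_le A B _).trans (sup_le ?_ ?_)
    · refine (mulIdl_mono le_rfl hAk).trans ((mulIdl_le_sup _ _ _).trans (sup_le le_sup_left ?_))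
      exact le_sup_of_le_right (mulIdl_le_right (hB.powIdl _) le_rfl)
    · refine (mulIdl_mono le_rfl hBk).trans ((mulIdl_le_sup _ _ _).trans (sup_le ?_ le_sup_right))
      exact le_sup_of_le_left (mulIdl_le_right (hA.powIdl _) le_rfl)

end TambaraFunctor

namespace TambaraFunctor

variable {G : Type} [Group G] {T : TambaraFunctor G}

open GSet

/-- Split off one orbit and induct on the cardinality. -/
theorem le_of_forall_isTransitive_le {J P : ∀ X : GSet G, Ideal (T.obj X)} (hJ : T.IsIdeal J)
    (hP : T.IsIdeal P) (h : ∀ W : GSet G, W.IsTransitive → J W ≤ P W) : J ≤ P := by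
  intro X
  induction hn : Nat.card X.carrier using Nat.strong_induction_on generalizing X with
  | _ n ih =>
  intro x hx
  rcases isEmpty_or_nonempty X.carrier with hX | ⟨⟨u⟩⟩
  · have := T.subsingleton_obj hX
    rw [Subsingleton.elim x 0]
    exact zero_mem _
  by_cases horb : ∀ v, v ∈ MulAction.orbit G u
  · exact h X ⟨⟨u⟩, (MulAction.isPretransitive_iff_orbit_eq_univ u).2
      (Set.eq_univ_of_forall horb)⟩ hx
  obtain ⟨v, hv⟩ := not_forall.1 horb
  have hS := isInvariant_orbit u
  refine T.mem_of_res_subIncl_mem hS hP.res_mem hP.tr_mem ?_ ?_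
  · exact ih _ (hn ▸ Finite.card_subtype_lt hv) _ rfl (hJ.res_mem _ hx)
  · exact ih _ (hn ▸ Finite.card_subtype_lt (not_not.2 (MulAction.mem_orbit_self u))) _ rfl
      (hJ.res_mem _ hx)

theorem IsPrime.mem_of_powIdl_le {P : ∀ X : GSet G, Ideal (T.obj X)} (hP : T.IsPrime P)
    {W : GSet G} (hW : W.IsTransitive) {b : T.obj W} (n : ℕ)
    (h : T.powIdl (T.principal W b) (n + 1) ≤ P) : b ∈ P W := by
  induction n with
  | zero =>
    have hb : b * 1 ∈ T.mulSet (T.principal W b) ⊤ W :=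
      mul_mem_mulSet (T.mem_principal_self b) Submodule.mem_top
    exact h W (Ideal.subset_span (by rwa [mul_one] at hb))
  | succ n ih =>
    by_contra hb
    refine hb (ih (le_of_forall_isTransitive_le ((T.isIdeal_principal b).powIdl _)
      hP.isIdeal fun Z hZ c hc => ?_))
    have hbc : T.mulIdl (T.principal W b) (T.principal Z c) ≤ P :=
      (mulIdl_mono le_rfl (T.principal_le ((T.isIdeal_principal b).powIdl _) hc)).trans h
    exact (hP.mem_or_mem hW hZ hbc).resolve_left hb

variable {I : ∀ X : GSet G, Ideal (T.obj X)} {X : GSet G}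

theorem mem_radicalSet_iff {a : T.obj X} :
    a ∈ T.radicalSet I X ↔ ∃ n, 0 < n ∧ T.powIdl (T.principal X a) n ≤ I :=
  Iff.rfl

theorem radicalSet_of_mem_principal {W : GSet G} {a : T.obj X} {c : T.obj W}
    (ha : a ∈ T.radicalSet I X) (hc : c ∈ T.principal X a W) : c ∈ T.radicalSet I W := by
  obtain ⟨n, hn, h⟩ := mem_radicalSet_iff.1 ha
  exact ⟨n, hn, (powIdl_mono (T.principal_le (T.isIdeal_principal a) hc) n).trans h⟩

theorem subset_radicalSet (hI : T.IsIdeal I) (X : GSet G) :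
    (I X : Set (T.obj X)) ⊆ T.radicalSet I X :=
  fun _ ha => ⟨1, one_pos, mulIdl_le_left hI (T.principal_le hI ha)⟩

theorem radicalSet_add {a b : T.obj X} (ha : a ∈ T.radicalSet I X)
    (hb : b ∈ T.radicalSet I X) : a + b ∈ T.radicalSet I X := by
  obtain ⟨n, hn, ha⟩ := mem_radicalSet_iff.1 ha
  obtain ⟨m, -, hb⟩ := mem_radicalSet_iff.1 hb
  have hA := T.isIdeal_principal a
  have hB := T.isIdeal_principal b
  refine ⟨n + m, by omega, ?_⟩
  calc T.powIdl (T.principal X (a + b)) (n + m)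
      ≤ T.powIdl (T.principal X a ⊔ T.principal X b) (n + m) :=
        powIdl_mono (T.principal_le (hA.sup hB) (add_mem
          (Submodule.mem_sup_left (T.mem_principal_self a))
          (Submodule.mem_sup_right (T.mem_principal_self b)))) _
    _ ≤ T.powIdl (T.principal X a) n ⊔ T.powIdl (T.principal X b) m := powIdl_sup_le hA hB n m
    _ ≤ I := sup_le ha hb

variable (T) in
def radical (hI : T.IsIdeal I) (X : GSet G) : Ideal (T.obj X) where
  carrier := T.radicalSet I X
  add_mem' := radicalSet_add
  zero_mem' := subset_radicalSet hI X (zero_mem _)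
  smul_mem' c _ ha := radicalSet_of_mem_principal ha (Ideal.mul_mem_left _ c (T.mem_principal_self _))

theorem isIdeal_radical (hI : T.IsIdeal I) : T.IsIdeal (T.radical hI) where
  res_mem f _ ha :=
    radicalSet_of_mem_principal ha ((T.isIdeal_principal _).res_mem f (T.mem_principal_self _))
  tr_mem f _ ha :=
    radicalSet_of_mem_principal ha ((T.isIdeal_principal _).tr_mem f (T.mem_principal_self _))
  shriek_mem f _ ha :=
    radicalSet_of_mem_principal ha ((T.isIdeal_principal _).shriek_mem f (T.mem_principal_self _))

theorem radicalSet_subset_of_isPrime {P : ∀ X : GSet G, Ideal (T.obj X)} (hP : T.IsPrime P)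
    (hIP : I ≤ P) (X : GSet G) : T.radicalSet I X ⊆ P X := by
  rintro a ⟨n, hn, ha⟩
  obtain ⟨k, rfl⟩ : ∃ k, n = k + 1 := ⟨n - 1, by omega⟩
  refine le_of_forall_isTransitive_le (T.isIdeal_principal a) hP.isIdeal (fun W hW c hc => ?_)
    X (T.mem_principal_self a)
  exact hP.mem_of_powIdl_le hW k
    (((powIdl_mono (T.principal_le (T.isIdeal_principal a) hc) _).trans ha).trans hIP)

end TambaraFunctor

theorem radical_isIdeal_general (G : Type) [Group G] (T : TambaraFunctor G)
    (I : ∀ X : GSet G, Ideal (T.obj X)) (hI : T.IsIdeal I) :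
    (∃ K : ∀ X : GSet G, Ideal (T.obj X), T.IsIdeal K ∧
      ∀ X : GSet G, (K X : Set (T.obj X)) = T.radicalSet I X) ∧
    (∀ X : GSet G, (I X : Set (T.obj X)) ⊆ T.radicalSet I X) ∧
    (∀ P : ∀ X : GSet G, Ideal (T.obj X), T.IsPrime P → (∀ X, I X ≤ P X) →
      ∀ X : GSet G, T.radicalSet I X ⊆ ↑(P X)) ∧
    ({ P : ∀ X : GSet G, Ideal (T.obj X) | T.IsPrime P ∧ ∀ X, I X ≤ P X } =
     { P : ∀ X : GSet G, Ideal (T.obj X) | T.IsPrime P ∧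
        ∀ X : GSet G, T.radicalSet I X ⊆ ↑(P X) }) := by
  have hrad : ∀ P : ∀ X : GSet G, Ideal (T.obj X), T.IsPrime P → (∀ X, I X ≤ P X) →
      ∀ X, T.radicalSet I X ⊆ P X :=
    fun _ hP hIP => TambaraFunctor.radicalSet_subset_of_isPrime hP hIP
  refine ⟨⟨T.radical hI, TambaraFunctor.isIdeal_radical hI, fun _ => rfl⟩,
    TambaraFunctor.subset_radicalSet hI, hrad, Set.ext fun P => ⟨?_, ?_⟩⟩
  · exact fun ⟨hP, hIP⟩ => ⟨hP, hrad P hP hIP⟩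
  · exact fun ⟨hP, h⟩ => ⟨hP, fun X => (TambaraFunctor.subset_radicalSet hI X).trans (h X)⟩

/-- `√𝔦` is an ideal containing `𝔦`, it is contained in every prime ideal
containing `𝔦`, and `V(√𝔦) = V(𝔦)` in `Spec(T)`. -/
theorem radical_isIdeal (G : Type) [Group G] [Finite G] (T : TambaraFunctor G)
    (hT : ∃ X : GSet G, Nontrivial (T.obj X))
    (I : ∀ X : GSet G, Ideal (T.obj X)) (hI : T.IsIdeal I) :
    (∃ K : ∀ X : GSet G, Ideal (T.obj X), T.IsIdeal K ∧
      ∀ X : GSet G, (K X : Set (T.obj X)) = T.radicalSet I X) ∧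
    (∀ X : GSet G, (I X : Set (T.obj X)) ⊆ T.radicalSet I X) ∧
    (∀ P : ∀ X : GSet G, Ideal (T.obj X), T.IsPrime P → (∀ X, I X ≤ P X) →
      ∀ X : GSet G, T.radicalSet I X ⊆ ↑(P X)) ∧
    ({ P : ∀ X : GSet G, Ideal (T.obj X) | T.IsPrime P ∧ ∀ X, I X ≤ P X } =
     { P : ∀ X : GSet G, Ideal (T.obj X) | T.IsPrime P ∧
        ∀ X : GSet G, T.radicalSet I X ⊆ ↑(P X) }) :=
  radical_isIdeal_general G T I hI
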